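/- Let X be a completely regular Hausdorff (Tychonoff) space and let H and H' be non-vanishing closed ideals of C_B(X). Then the following are equivalent: (1) sp(H) and sp(H') are homeomorphic; (2) the partially ordered sets (sub(H), ⊆) and (sub(H'), ⊆) of closed subideals of H and of H', respectively, are order-isomorphic. -/

import Mathlib

open BoundedContinuousFunction Set Filter Topology

section Preamble

variable {X : Type*} [TopologicalSpace X] {𝕜 : Type*} [RCLike 𝕜]

theorem betaExt_aux (f : X →ᵇ 𝕜) :
    Continuous (fun x => (⟨f x, by
      simpa [Metric.mem_closedBall, dist_zero_right] using f.norm_coe_le_norm x⟩ :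
        Metric.closedBall (0 : 𝕜) ‖f‖)) :=
  f.continuous.subtype_mk _

/-- `f_β`, the unique continuous extension of a bounded continuous function `f : X → 𝕜` to the
Stone–Čech compactification `βX`. -/
noncomputable def betaExt (f : X →ᵇ 𝕜) : StoneCech X → 𝕜 :=
  haveI : CompactSpace (Metric.closedBall (0 : 𝕜) ‖f‖) :=
    isCompact_iff_compactSpace.mp (isCompact_closedBall 0 ‖f‖)
  fun p => (stoneCechExtend (betaExt_aux f) p).1

theorem betaExt_unit (f : X →ᵇ 𝕜) (x : X) : betaExt f (stoneCechUnit x) = f x := by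
  haveI : CompactSpace (Metric.closedBall (0 : 𝕜) ‖f‖) :=
    isCompact_iff_compactSpace.mp (isCompact_closedBall 0 ‖f‖)
  exact congrArg Subtype.val (congrFun (stoneCechExtend_extends (betaExt_aux f)) x)

theorem continuous_betaExt (f : X →ᵇ 𝕜) : Continuous (betaExt f) := by
  haveI : CompactSpace (Metric.closedBall (0 : 𝕜) ‖f‖) :=
    isCompact_iff_compactSpace.mp (isCompact_closedBall 0 ‖f‖)
  exact continuous_subtype_val.comp (continuous_stoneCechExtend _)

/-- `λ_G X`, the union over `g ∈ G` of the cozero-sets in `βX` of the extensions `g_β`. -/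
def lambdaSet (G : Ideal (X →ᵇ 𝕜)) : Set (StoneCech X) :=
  ⋃ g ∈ G, {p | betaExt g p ≠ 0}

end Preamble

/-!
Extension to `βX` identifies `C_B(X)` isometrically with `C(βX, 𝕜)`, and in `C(K, 𝕜)` for
compact Hausdorff `K` a closed ideal is the ideal of functions vanishing off its cozero-set, an
open set. Hence `G ↦ λ_G X` is an order isomorphism from the closed ideals of `C_B(X)` onto the
open subsets of `βX`, and the closed subideals of `H` correspond to the open subsets of `sp(H)`.
So (1) ⇒ (2) by transporting open sets along a homeomorphism. For (2) ⇒ (1), `sp(H)` is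
Hausdorff, and the points of a T1 space are recovered from its lattice of open sets as the
coatoms `{x}ᶜ`.
-/

open TopologicalSpace ContinuousMap

section OpensOrderIso

variable {S T : Type*} [TopologicalSpace S] [TopologicalSpace T] [T1Space S] [T1Space T]

theorem TopologicalSpace.Opens.le_compl_singleton_iff (U : Opens S) (x : S) :
    U ≤ ({x} : Closeds S).compl ↔ x ∉ U :=
  Set.subset_compl_singleton_iff

theorem OrderIso.exists_map_compl_singleton (e : Opens S ≃o Opens T) (p : S) :
    ∃ q : T, e ({p} : Closeds S).compl = ({q} : Closeds T).compl :=
  Opens.isCoatom_iff.mp ((e.isCoatom_iff _).mpr (Opens.isCoatom_iff.mpr ⟨p, rfl⟩))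

noncomputable def OrderIso.pointMap (e : Opens S ≃o Opens T) (p : S) : T :=
  (e.exists_map_compl_singleton p).choose

theorem OrderIso.map_compl_singleton (e : Opens S ≃o Opens T) (p : S) :
    e ({p} : Closeds S).compl = ({e.pointMap p} : Closeds T).compl :=
  (e.exists_map_compl_singleton p).choose_spec

theorem OrderIso.pointMap_mem_iff (e : Opens S ≃o Opens T) (p : S) (V : Opens T) :
    e.pointMap p ∈ V ↔ p ∈ e.symm V := by
  rw [← not_iff_not, ← Opens.le_compl_singleton_iff, ← Opens.le_compl_singleton_iff,
    ← e.map_compl_singleton, e.symm_apply_le]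

theorem OrderIso.pointMap_symm_pointMap (e : Opens S ≃o Opens T) (p : S) :
    e.symm.pointMap (e.pointMap p) = p := by
  refine Inseparable.eq (inseparable_iff_forall_isOpen.mpr fun s hs => ?_)
  change _ ∈ (⟨s, hs⟩ : Opens S) ↔ p ∈ (⟨s, hs⟩ : Opens S)
  rw [e.symm.pointMap_mem_iff _ ⟨s, hs⟩, OrderIso.symm_symm, e.pointMap_mem_iff,
    e.symm_apply_apply]

theorem OrderIso.continuous_pointMap (e : Opens S ≃o Opens T) : Continuous e.pointMap :=
  continuous_def.mpr fun s hs => by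
    convert (e.symm ⟨s, hs⟩).isOpen
    exact Set.ext fun p => e.pointMap_mem_iff p ⟨s, hs⟩

noncomputable def Homeomorph.ofOpensOrderIso (e : Opens S ≃o Opens T) : S ≃ₜ T where
  toFun := e.pointMap
  invFun := e.symm.pointMap
  left_inv := e.pointMap_symm_pointMap
  right_inv q := by simpa using e.symm.pointMap_symm_pointMap q
  continuous_toFun := e.continuous_pointMap
  continuous_invFun := e.symm.continuous_pointMap

end OpensOrderIso

section StoneCech

variable {X : Type*} [TopologicalSpace X] {𝕜 : Type*} [RCLike 𝕜]

theorem norm_betaExt_le (f : X →ᵇ 𝕜) (p : StoneCech X) : ‖betaExt f p‖ ≤ ‖f‖ := by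
  have : CompactSpace (Metric.closedBall (0 : 𝕜) ‖f‖) :=
    isCompact_iff_compactSpace.mp (isCompact_closedBall 0 ‖f‖)
  exact mem_closedBall_zero_iff.mp (stoneCechExtend (betaExt_aux f) p).2

theorem betaExt_unique {f : X →ᵇ 𝕜} {g : StoneCech X → 𝕜} (hg : Continuous g)
    (h : ∀ x, g (stoneCechUnit x) = f x) : betaExt f = g :=
  Continuous.ext_on denseRange_stoneCechUnit (continuous_betaExt f) hg <| by
    rintro - ⟨x, rfl⟩
    rw [betaExt_unit, h]

noncomputable def betaEquiv : (X →ᵇ 𝕜) ≃+* C(StoneCech X, 𝕜) where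
  toFun f := ⟨betaExt f, continuous_betaExt f⟩
  invFun g := (mkOfCompact g).compContinuous ⟨stoneCechUnit, continuous_stoneCechUnit⟩
  left_inv f := by
    ext x
    exact betaExt_unit f x
  right_inv g := ContinuousMap.ext <| congrFun <| betaExt_unique g.continuous fun _ => rfl
  map_add' f g := ContinuousMap.ext <| congrFun <| betaExt_unique
    ((continuous_betaExt f).add (continuous_betaExt g)) fun x => by simp [betaExt_unit]
  map_mul' f g := ContinuousMap.ext <| congrFun <| betaExt_unique
    ((continuous_betaExt f).mul (continuous_betaExt g)) fun x => by simp [betaExt_unit]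

theorem norm_betaEquiv (f : X →ᵇ 𝕜) : ‖(betaEquiv f : C(StoneCech X, 𝕜))‖ = ‖f‖ := by
  refine le_antisymm ((ContinuousMap.norm_le _ (norm_nonneg f)).mpr (norm_betaExt_le f))
    ((BoundedContinuousFunction.norm_le (norm_nonneg _)).mpr fun x => ?_)
  rw [← betaExt_unit]
  exact (betaEquiv f : C(StoneCech X, 𝕜)).norm_coe_le_norm (stoneCechUnit x)

theorem isometry_betaEquiv : Isometry (betaEquiv (X := X) (𝕜 := 𝕜)) :=
  Isometry.of_dist_eq fun f g => by rw [dist_eq_norm, dist_eq_norm, ← map_sub, norm_betaEquiv]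

theorem lambdaSet_eq_setOfIdeal_map (G : Ideal (X →ᵇ 𝕜)) :
    lambdaSet G = setOfIdeal (G.map betaEquiv) := by
  ext p
  simp only [lambdaSet, Set.mem_iUnion, exists_prop, mem_setOfIdeal, Ideal.mem_map_of_equiv,
    exists_exists_and_eq_and]
  rfl

theorem isOpen_lambdaSet (G : Ideal (X →ᵇ 𝕜)) : IsOpen (lambdaSet G) :=
  lambdaSet_eq_setOfIdeal_map G ▸ setOfIdeal_open _

theorem isClosed_map_betaEquiv {G : Ideal (X →ᵇ 𝕜)} (hG : IsClosed (G : Set (X →ᵇ 𝕜))) :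
    IsClosed (G.map betaEquiv : Set C(StoneCech X, 𝕜)) := by
  rw [← Ideal.comap_symm]
  exact hG.preimage (isometry_betaEquiv.right_inv betaEquiv.right_inv).continuous

theorem idealOfSet_lambdaSet {G : Ideal (X →ᵇ 𝕜)} (hG : IsClosed (G : Set (X →ᵇ 𝕜))) :
    idealOfSet 𝕜 (lambdaSet G) = G.map betaEquiv := by
  rw [lambdaSet_eq_setOfIdeal_map, idealOfSet_ofIdeal_isClosed (isClosed_map_betaEquiv hG)]

theorem lambdaSet_subset_lambdaSet_iff {G G' : Ideal (X →ᵇ 𝕜)}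
    (hG' : IsClosed (G' : Set (X →ᵇ 𝕜))) : lambdaSet G ⊆ lambdaSet G' ↔ G ≤ G' := by
  rw [lambdaSet_eq_setOfIdeal_map G]
  refine (ideal_gc _ 𝕜 _ _).trans ?_
  rw [idealOfSet_lambdaSet hG', Ideal.map_le_iff_le_comap,
    Ideal.comap_map_of_bijective _ betaEquiv.bijective]

theorem lambdaSet_comap_idealOfSet {U : Set (StoneCech X)} (hU : IsOpen U) :
    lambdaSet ((idealOfSet 𝕜 U).comap betaEquiv) = U := by
  rw [lambdaSet_eq_setOfIdeal_map, Ideal.map_comap_of_surjective _ betaEquiv.surjective,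
    setOfIdeal_ofSet_of_isOpen 𝕜 hU]

theorem comap_idealOfSet_lambdaSet {G : Ideal (X →ᵇ 𝕜)} (hG : IsClosed (G : Set (X →ᵇ 𝕜))) :
    (idealOfSet 𝕜 (lambdaSet G)).comap betaEquiv = G := by
  rw [idealOfSet_lambdaSet hG, Ideal.comap_map_of_bijective _ betaEquiv.bijective]

noncomputable def closedSubidealsOrderIsoOpens (H : Ideal (X →ᵇ 𝕜))
    (hH : IsClosed (H : Set (X →ᵇ 𝕜))) :
    {G : Ideal (X →ᵇ 𝕜) // IsClosed (G : Set (X →ᵇ 𝕜)) ∧ G ≤ H} ≃o Opens (lambdaSet H) where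
  toFun G := ⟨(↑) ⁻¹' lambdaSet G.1, (isOpen_lambdaSet G.1).preimage continuous_subtype_val⟩
  invFun W := ⟨(idealOfSet 𝕜 ((↑) '' (W : Set (lambdaSet H)))).comap betaEquiv,
    (idealOfSet_closed 𝕜 _).preimage isometry_betaEquiv.continuous, by
      rw [← lambdaSet_subset_lambdaSet_iff hH, lambdaSet_comap_idealOfSet
        ((isOpen_lambdaSet H).isOpenMap_subtype_val _ W.isOpen)]
      exact Subtype.coe_image_subset _ _⟩
  left_inv G := by
    have hGH : lambdaSet G.1 ⊆ lambdaSet H := (lambdaSet_subset_lambdaSet_iff hH).mpr G.2.2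
    refine Subtype.ext ?_
    simp only [Opens.coe_mk, Subtype.image_preimage_coe, Set.inter_eq_right.mpr hGH]
    exact comap_idealOfSet_lambdaSet G.2.1
  right_inv W := by
    refine Opens.ext ?_
    simp only [Opens.coe_mk]
    rw [lambdaSet_comap_idealOfSet ((isOpen_lambdaSet H).isOpenMap_subtype_val _ W.isOpen),
      Set.preimage_image_eq _ Subtype.val_injective]
  map_rel_iff' {G G'} := by
    have hGH : lambdaSet G.1 ⊆ Set.range (Subtype.val : lambdaSet H → StoneCech X) := by
      rw [Subtype.range_coe]
      exact (lambdaSet_subset_lambdaSet_iff hH).mpr G.2.2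
    change Subtype.val ⁻¹' lambdaSet G.1 ⊆ Subtype.val ⁻¹' lambdaSet G'.1 ↔ G.1 ≤ G'.1
    rw [Set.preimage_subset_preimage_iff hGH, lambdaSet_subset_lambdaSet_iff G'.2.1]

end StoneCech

theorem spectra_homeomorphic_iff_general {X : Type*} [TopologicalSpace X]
    {𝕜 : Type*} [RCLike 𝕜] (H H' : Ideal (X →ᵇ 𝕜))
    (hcl : IsClosed (H : Set (X →ᵇ 𝕜)))
    (hcl' : IsClosed (H' : Set (X →ᵇ 𝕜))) :
    Nonempty (↥(lambdaSet H) ≃ₜ ↥(lambdaSet H')) ↔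
      Nonempty
        ({G : Ideal (X →ᵇ 𝕜) // IsClosed (G : Set (X →ᵇ 𝕜)) ∧ G ≤ H} ≃o
         {G : Ideal (X →ᵇ 𝕜) // IsClosed (G : Set (X →ᵇ 𝕜)) ∧ G ≤ H'}) := by
  constructor
  · rintro ⟨φ⟩
    exact ⟨(closedSubidealsOrderIsoOpens H hcl).trans <|
      φ.opensCongr.trans (closedSubidealsOrderIsoOpens H' hcl').symm⟩
  · rintro ⟨ψ⟩
    exact ⟨.ofOpensOrderIso <| (closedSubidealsOrderIsoOpens H hcl).symm.trans <|
      ψ.trans (closedSubidealsOrderIsoOpens H' hcl')⟩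

/-- For a Tychonoff space `X` and non-vanishing closed ideals `H`, `H'` of `C_B(X)`:
`sp(H)` and `sp(H')` are homeomorphic iff the posets of closed subideals of `H` and of `H'`
are order-isomorphic. -/
theorem spectra_homeomorphic_iff {X : Type*} [TopologicalSpace X] [T35Space X]
    {𝕜 : Type*} [RCLike 𝕜] (H H' : Ideal (X →ᵇ 𝕜))
    (hcl : IsClosed (H : Set (X →ᵇ 𝕜))) (hnv : ∀ x : X, ∃ h ∈ H, h x ≠ 0)
    (hcl' : IsClosed (H' : Set (X →ᵇ 𝕜))) (hnv' : ∀ x : X, ∃ h ∈ H', h x ≠ 0) :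
    Nonempty (↥(lambdaSet H) ≃ₜ ↥(lambdaSet H')) ↔
      Nonempty
        ({G : Ideal (X →ᵇ 𝕜) // IsClosed (G : Set (X →ᵇ 𝕜)) ∧ G ≤ H} ≃o
         {G : Ideal (X →ᵇ 𝕜) // IsClosed (G : Set (X →ᵇ 𝕜)) ∧ G ≤ H'}) :=
  spectra_homeomorphic_iff_general H H' hcl hcl'
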